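/- Let M be a non-commutative magma (set with a binary operation) whose center Z(M) = {z ∈ M : zm = mz for all m ∈ M} is non-empty. Then the countable direct power M^∞ is not q-compact. -/

import Mathlib

/-- Terms in one binary operation, with constants from the magma `M`. -/
inductive MagTerm (M : Type) (n : ℕ) where
  | var : Fin n → MagTerm M n
  | const : M → MagTerm M n
  | mul : MagTerm M n → MagTerm M n → MagTerm M n

def MagTerm.eval {M : Type} [Mul M] {n : ℕ} (v : Fin n → M) : MagTerm M n → M
  | .var i => v i
  | .const m => m
  | .mul t s => t.eval v * s.eval v

def SolSet {M : Type} [Mul M] {n : ℕ} (S : Set (MagTerm M n × MagTerm M n)) :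
    Set (Fin n → M) :=
  {v | ∀ e ∈ S, e.1.eval v = e.2.eval v}

/-- A magma `H` is q-compact if whenever the solution set of a system of equations
with constants from `H` is contained in that of a single equation, some finite
subsystem already has its solution set contained in that of the equation. -/
def QCompact (H : Type) [Mul H] : Prop :=
  ∀ (n : ℕ) (S : Set (MagTerm H n × MagTerm H n)) (e : MagTerm H n × MagTerm H n),
    SolSet S ⊆ SolSet {e} → ∃ S' ⊆ S, S'.Finite ∧ SolSet S' ⊆ SolSet {e}

/-!
Let `a, b` be non-commuting and `z` central, and let `cₖ ∈ M^∞` be `a` at coordinate `k` and `z`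
elsewhere. Reading off coordinate `k`, every common solution `x` of the equations `x cₖ = cₖ x`
commutes with the constant sequence `a`. A finite subsystem only involves finitely many `k`, so it
misses some coordinate `N`; the sequence that is `b` at `N` and `z` elsewhere commutes with every
`cₖ`, `k ≠ N`, because `z` is central, but not with the constant `a`.
-/

open Function Set

section

variable {M : Type} [Mul M]

def commEq (c : M) : MagTerm M 1 × MagTerm M 1 :=
  (.mul (.var 0) (.const c), .mul (.const c) (.var 0))

theorem mem_solSet_commEq {c : M} {v : Fin 1 → M} :
    v ∈ SolSet {commEq c} ↔ Commute (v 0) c := by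
  simp [SolSet, commEq, MagTerm.eval, commute_iff_eq]

theorem mem_solSet_image_commEq {ι : Type*} {c : ι → M} {K : Set ι} {v : Fin 1 → M} :
    v ∈ SolSet (commEq ∘ c '' K) ↔ ∀ k ∈ K, Commute (v 0) (c k) := by
  simp [SolSet, commEq, MagTerm.eval, commute_iff_eq]

theorem not_qCompact_of_forall_finite {ι : Type*} {n : ℕ} (E : ι → MagTerm M n × MagTerm M n)
    (e : MagTerm M n × MagTerm M n) (h : SolSet (range E) ⊆ SolSet {e})
    (hfin : ∀ K : Set ι, K.Finite → ¬ SolSet (E '' K) ⊆ SolSet {e}) : ¬ QCompact M := by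
  intro hq
  obtain ⟨K, -, hK, hsub⟩ :=
    exists_subset_image_finite_and.1 (image_univ (f := E) ▸ hq n (range E) e h)
  exact hfin K hK hsub

theorem Pi.commute_const_of_forall_commute_update {ι : Type*} [DecidableEq ι] {x : ι → M}
    {z a : M} (h : ∀ k, Commute x (update (const ι z) k a)) : Commute x (const ι a) :=
  Pi.commute_iff.2 fun k => by simpa using Pi.commute_iff.1 (h k) k

theorem Pi.commute_update_update_of_ne {ι : Type*} [DecidableEq ι] {z : M}
    (hz : ∀ m, Commute z m) {i j : ι} (hij : i ≠ j) (p q : M) :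
    Commute (update (const ι z) i p) (update (const ι z) j q) :=
  Pi.commute_iff.2 fun k => by
    rcases eq_or_ne k i with rfl | hki
    · simpa [hij] using (hz p).symm
    · rcases eq_or_ne k j with rfl | hkj
      · simpa [hki] using hz q
      · simp [hki, hkj]

end

/-- For a non-commutative magma `M` with non-empty center, the countable direct power
`M^∞` is not q-compact. -/
theorem magma_power_not_qcompact {M : Type} [Mul M]
    (hnc : ∃ a b : M, a * b ≠ b * a)
    (hz : ∃ z : M, ∀ m : M, z * m = m * z) :
    ¬ QCompact (ℕ → M) := by
  obtain ⟨a, b, hab⟩ := hnc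
  obtain ⟨z, hz⟩ := hz
  let c : ℕ → ℕ → M := fun k => update (const ℕ z) k a
  refine not_qCompact_of_forall_finite (commEq ∘ c) (commEq (const ℕ a)) ?_ ?_
  · intro v hv
    rw [← image_univ, mem_solSet_image_commEq] at hv
    exact mem_solSet_commEq.2 (Pi.commute_const_of_forall_commute_update fun k => hv k trivial)
  · intro K hK hsub
    obtain ⟨N, hN⟩ := hK.infinite_compl.nonempty
    have hsol : (fun _ => update (const ℕ z) N b) ∈ SolSet (commEq ∘ c '' K) :=
      mem_solSet_image_commEq.2 fun k hk =>
        Pi.commute_update_update_of_ne hz (ne_of_mem_of_not_mem hk hN).symm b a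
    have hba := Pi.commute_iff.1 (mem_solSet_commEq.1 (hsub hsol)) N
    simp only [update_self, const_apply] at hba
    exact hab hba.eq.symm
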